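/- arXiv:2305.15150 — 2 statements merged into one kernel-verified Lean document; each statement's English description precedes it below -/
import Mathlib

section
/- Let u and v be vertices of a directed graph such that v is not reachable from u. Then the set R_u ∪ R_v ∪ S_v is unreachable from its complement: for all vertices x ∉ R_u ∪ R_v ∪ S_v and all y ∈ R_u ∪ R_v ∪ S_v, y is not reachable from x. (Intermediate step in the proof of Theorem 2 of the paper.) -/
/-! A set is unreachable from its complement exactly when it is closed under taking
predecessors. `R_v ∪ S_v` is the set of vertices reaching `v`, which is clearly closed. `R_u` is
closed too: a predecessor `x` of `y ∈ R_u` reaches `u`, and if `x` were in `S_u` then `u` would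
reach `y`, putting `y` in `S_u`. -/

open Relation

section BackwardClosed

variable {V : Type*} (E : V → V → Prop)

def IsBackwardClosed (B : Set V) : Prop :=
  ∀ ⦃x y⦄, ReflTransGen E x y → y ∈ B → x ∈ B

variable {E}

theorem IsBackwardClosed.not_reflTransGen {B : Set V} (hB : IsBackwardClosed E B)
    {x y : V} (hx : x ∉ B) (hy : y ∈ B) : ¬ ReflTransGen E x y :=
  fun hxy => hx (hB hxy hy)

theorem IsBackwardClosed.union {A B : Set V} (hA : IsBackwardClosed E A)
    (hB : IsBackwardClosed E B) : IsBackwardClosed E (A ∪ B) := by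
  rintro x y hxy (hy | hy)
  · exact Or.inl (hA hxy hy)
  · exact Or.inr (hB hxy hy)

theorem isBackwardClosed_reaching (v : V) :
    IsBackwardClosed E {w | ReflTransGen E w v} :=
  fun _ _ hxy hy => hxy.trans hy

theorem isBackwardClosed_reaching_diff_scc (u : V) :
    IsBackwardClosed E
      {w | w ∉ {w | ReflTransGen E u w ∧ ReflTransGen E w u} ∧ ReflTransGen E w u} := by
  rintro x y hxy ⟨hyS, hyu⟩
  exact ⟨fun ⟨hux, _⟩ => hyS ⟨hux.trans hxy, hyu⟩, hxy.trans hyu⟩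

theorem reaching_diff_scc_union_scc (v : V) :
    {w | w ∉ {w | ReflTransGen E v w ∧ ReflTransGen E w v} ∧ ReflTransGen E w v} ∪
      {w | ReflTransGen E v w ∧ ReflTransGen E w v} = {w | ReflTransGen E w v} := by
  ext w
  simp only [Set.mem_union, Set.mem_ofPred_eq]
  tauto

end BackwardClosed

theorem RuRvSv_unreachable_from_complement_general {V : Type*} (E : V → V → Prop) (u v : V)
    (Su : Set V) (hSu : Su = {w | Relation.ReflTransGen E u w ∧ Relation.ReflTransGen E w u})
    (Ru : Set V) (hRu : Ru = {w | w ∉ Su ∧ Relation.ReflTransGen E w u})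
    (Sv : Set V) (hSv : Sv = {w | Relation.ReflTransGen E v w ∧ Relation.ReflTransGen E w v})
    (Rv : Set V) (hRv : Rv = {w | w ∉ Sv ∧ Relation.ReflTransGen E w v}) :
    ∀ x, x ∉ Ru ∪ Rv ∪ Sv → ∀ y ∈ Ru ∪ Rv ∪ Sv, ¬ Relation.ReflTransGen E x y := by
  have hclosed : IsBackwardClosed E (Ru ∪ Rv ∪ Sv) := by
    subst hSu hRu hSv hRv
    rw [Set.union_assoc, reaching_diff_scc_union_scc]
    exact (isBackwardClosed_reaching_diff_scc u).union (isBackwardClosed_reaching v)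
  exact fun x hx y hy => hclosed.not_reflTransGen hx hy

/-- If `v` is not reachable from `u`, then `R_u ∪ R_v ∪ S_v` is unreachable from
its complement. -/
theorem RuRvSv_unreachable_from_complement {V : Type*} (E : V → V → Prop) (u v : V)
    (huv : ¬ Relation.ReflTransGen E u v)
    (Su : Set V) (hSu : Su = {w | Relation.ReflTransGen E u w ∧ Relation.ReflTransGen E w u})
    (Ru : Set V) (hRu : Ru = {w | w ∉ Su ∧ Relation.ReflTransGen E w u})
    (Sv : Set V) (hSv : Sv = {w | Relation.ReflTransGen E v w ∧ Relation.ReflTransGen E w v})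
    (Rv : Set V) (hRv : Rv = {w | w ∉ Sv ∧ Relation.ReflTransGen E w v}) :
    ∀ x, x ∉ Ru ∪ Rv ∪ Sv → ∀ y ∈ Ru ∪ Rv ∪ Sv, ¬ Relation.ReflTransGen E x y :=
  RuRvSv_unreachable_from_complement_general E u v Su hSu Ru hRu Sv hSv Rv hRv
end

section
/- Acyclicity of dependency graphs (combinatorial core of the linearizability proof, Appendix A): let V be a type of vertices, α a linearly ordered type, τ : V → α a labelling, W ⊆ V a set (of 'write' vertices), and R a transitive and irreflexive binary relation on V (the 'real-time' order). Let E be a binary relation on V such that: (i) for all a, b, if E a b then τ(a) ≤ τ(b); (ii) for all a, b, if E a b and b ∈ W then τ(a) < τ(b); and (iii) for all a, b, if E a b, a ∉ W and b ∉ W, then R a b. Then E has no cycles: for every vertex x, (x, x) does not lie in the transitive closure of E. -/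
/-!
Along a path of `E`-edges the label `τ` never decreases, and it strictly increases at every edge
into a write. So if a path closes up, all of its vertices carry the same label and none of them is
a write; every edge of the cycle then lies in `R`, contradicting that `R` is a strict order.
Equivalently, every edge lies in one strict order: compare labels first and, among vertices with
equal labels, never step into a write and step between non-writes only along `R`.
-/

theorem Relation.not_transGen_self_of_le {α : Type*} {r s : α → α → Prop} [IsStrictOrder α s]
    (h : r ≤ s) (a : α) : ¬ Relation.TransGen r a a :=
  fun ha ↦ irrefl a (Relation.transGen_minimal h a a ha)

section DependencyOrder

variable {V α : Type*} [LinearOrder α] (τ : V → α) (W : Set V) (R : V → V → Prop)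

def DependencyOrder (a b : V) : Prop :=
  τ a < τ b ∨ (τ a = τ b ∧ b ∉ W ∧ (a ∉ W → R a b))

variable {τ W R}

theorem DependencyOrder.le {a b : V} (h : DependencyOrder τ W R a b) : τ a ≤ τ b :=
  h.elim le_of_lt fun h ↦ h.1.le

theorem dependencyOrder_of_le {a b : V} (hle : τ a ≤ τ b) (hW : b ∈ W → τ a < τ b)
    (hR : a ∉ W → b ∉ W → R a b) : DependencyOrder τ W R a b := by
  by_cases hb : b ∈ W
  · exact Or.inl (hW hb)
  · rcases hle.lt_or_eq with hlt | heq
    · exact Or.inl hlt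
    · exact Or.inr ⟨heq, hb, fun ha ↦ hR ha hb⟩

theorem DependencyOrder.trans [IsTrans V R] {a b c : V} (hab : DependencyOrder τ W R a b)
    (hbc : DependencyOrder τ W R b c) : DependencyOrder τ W R a c := by
  rcases hab with hlt | ⟨heq, hb, hRab⟩
  · exact Or.inl (hlt.trans_le hbc.le)
  · rcases hbc with hlt | ⟨heq', hc, hRbc⟩
    · exact Or.inl (heq ▸ hlt)
    · exact Or.inr ⟨heq.trans heq', hc, fun ha ↦ _root_.trans (hRab ha) (hRbc hb)⟩

theorem DependencyOrder.irrefl [Std.Irrefl R] (a : V) : ¬ DependencyOrder τ W R a a := by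
  rintro (hlt | ⟨-, ha, hRaa⟩)
  · exact hlt.false
  · exact _root_.irrefl a (hRaa ha)

instance [IsStrictOrder V R] : IsStrictOrder V (DependencyOrder τ W R) where
  irrefl := DependencyOrder.irrefl
  trans _ _ _ := DependencyOrder.trans

end DependencyOrder

/-- Acyclicity of dependency graphs: given a labelling `τ` into a linear order,
a set `W` of write vertices and a strict (transitive and irreflexive) real-time
order `R`, any relation `E` that is non-decreasing on labels, strictly increasing
into writes, and contained in `R` between non-writes, has no cycles. -/
theorem dependency_graph_acyclic {V : Type*} {α : Type*} [LinearOrder α]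
    (τ : V → α) (W : Set V) (R : V → V → Prop)
    (hRtrans : Transitive R) (hRirrefl : Irreflexive R)
    (E : V → V → Prop)
    (h1 : ∀ a b, E a b → τ a ≤ τ b)
    (h2 : ∀ a b, E a b → b ∈ W → τ a < τ b)
    (h3 : ∀ a b, E a b → a ∉ W → b ∉ W → R a b) :
    ∀ x : V, ¬ Relation.TransGen E x x := by
  have : IsStrictOrder V R := { irrefl := hRirrefl, trans := hRtrans }
  exact Relation.not_transGen_self_of_le
    fun a b hab ↦ dependencyOrder_of_le (h1 a b hab) (h2 a b hab) (h3 a b hab)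
end
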